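/- arXiv:1208.4702 — 3 statements merged into one kernel-verified Lean document; each statement's English description precedes it below -/
import Mathlib

section
/- (Inclusion–exclusion for signatures) Let Ω̄ be a nonempty antichain of nonempty subsets of X = {1,...,n} and φ_Ω̄ the structure function with minimal cut sets Ω̄. Then for each i, N_i(φ_Ω̄) = Σ_{∅ ≠ Γ ⊆ Ω̄} (-1)^{|Γ|+1} N_i(φ*_{|∪Γ|}), where φ*_m is the structure function whose unique minimal cut set has cardinality m (say {1,...,m}), and ∪Γ is the union of the sets in Γ. -/
open Finset

/-- The set {σ(i), σ(i+1), ..., σ(n)} (1-based indexing) of the last components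
in the failure order σ. -/
def tailSet {n : ℕ} (σ : Equiv.Perm (Fin n)) (i : ℕ) : Finset (Fin n) :=
  (Finset.univ.filter (fun k : Fin n => i ≤ k.1 + 1)).image σ

/-- `Nperm n φ i` is the number of permutations of the n components whose
breakdown index is i. -/
def Nperm (n : ℕ) (φ : Finset (Fin n) → Bool) (i : ℕ) : ℕ :=
  (Finset.univ.filter (fun σ : Equiv.Perm (Fin n) =>
    φ (tailSet σ i) = true ∧ φ (tailSet σ (i + 1)) = false)).card

/-- The structure function induced by a family Ω of cut sets:
φ_Ω(A) = 0 iff X \ A contains some member of Ω. -/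
def phiOmega (n : ℕ) (Ω : Finset (Finset (Fin n))) : Finset (Fin n) → Bool :=
  fun A => decide (∀ C ∈ Ω, ¬ C ⊆ Aᶜ)

/-- The parallel-type system φ*_m with unique minimal cut set {1,...,m}. -/
def phiParallel (n m : ℕ) : Finset (Fin n) → Bool :=
  fun A => decide (∃ k ∈ A, k.1 < m)

/-!
Let E_j(φ) be the set of orders σ with φ({σ(j), …, σ(n)}) = 0. For monotone φ these sets grow
with j, so N_i(φ) = |E_{i+1}(φ)| - |E_i(φ)|. For φ_Ω̄, E_j is the union over C ∈ Ω̄ of the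
orders in which all of C has failed before step j, and inclusion–exclusion expresses its size
through the intersections, the orders in which all of ∪Γ has failed. Relabelling components
shows that their number depends only on |∪Γ|, so it is |E_j(φ*_{|∪Γ|})|.
-/

lemma tailSet_mul {n : ℕ} (π σ : Equiv.Perm (Fin n)) (j : ℕ) :
    tailSet (π * σ) j = (tailSet σ j).image π := by
  simp [tailSet, image_image, Function.comp_def]

lemma tailSet_antitone {n : ℕ} (σ : Equiv.Perm (Fin n)) : Antitone (tailSet σ) :=
  fun _ _ hij => image_subset_image (monotone_filter_right _ fun _ _ hk => hij.trans hk)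

def failSet (n : ℕ) (φ : Finset (Fin n) → Bool) (j : ℕ) : Finset (Equiv.Perm (Fin n)) :=
  univ.filter fun σ => φ (tailSet σ j) = false

lemma failSet_subset_failSet_succ {n : ℕ} {φ : Finset (Fin n) → Bool} (hφ : Monotone φ)
    (j : ℕ) : failSet n φ j ⊆ failSet n φ (j + 1) := by
  intro σ hσ
  simp only [failSet, mem_filter, mem_univ, true_and] at hσ ⊢
  simpa [hσ, Bool.le_iff_imp] using hφ (tailSet_antitone σ j.le_succ)

lemma Nperm_eq_card_failSet_sub {n : ℕ} {φ : Finset (Fin n) → Bool} (hφ : Monotone φ)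
    (i : ℕ) : (Nperm n φ i : ℤ) = #(failSet n φ (i + 1)) - #(failSet n φ i) := by
  have hsub := failSet_subset_failSet_succ hφ i
  have hdiff : Nperm n φ i = #(failSet n φ (i + 1) \ failSet n φ i) := by
    unfold Nperm failSet
    congr 1
    ext σ
    simp [and_comm]
  rw [hdiff, card_sdiff_of_subset hsub, Nat.cast_sub (card_le_card hsub)]

lemma phiOmega_monotone {n : ℕ} (Ω : Finset (Finset (Fin n))) : Monotone (phiOmega n Ω) :=
  fun _ _ hAB hA => by
    simp only [phiOmega, decide_eq_true_eq] at hA ⊢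
    exact fun C hC hCB => hA C hC (hCB.trans (compl_subset_compl.2 hAB))

lemma phiParallel_monotone (n m : ℕ) : Monotone (phiParallel n m) :=
  fun _ _ hAB hA => by
    simp only [phiParallel, decide_eq_true_eq] at hA ⊢
    obtain ⟨k, hk, hkm⟩ := hA
    exact ⟨k, hAB hk, hkm⟩

/-- The orders in which every component of `S` has failed before step `j`. -/
def allFailed (n : ℕ) (S : Finset (Fin n)) (j : ℕ) : Finset (Equiv.Perm (Fin n)) :=
  univ.filter fun σ => Disjoint S (tailSet σ j)

lemma exists_perm_image_eq {α : Type*} [Fintype α] [DecidableEq α] {S T : Finset α}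
    (h : #S = #T) : ∃ π : Equiv.Perm α, S.image π = T := by
  let e : {x // x ∈ S} ≃ {x // x ∈ T} := Fintype.equivOfCardEq (by simpa using h)
  refine ⟨e.extendSubtype, eq_of_subset_of_card_le ?_ ?_⟩
  · exact image_subset_iff.2 fun x hx => e.extendSubtype_mem x hx
  · rw [card_image_of_injective _ (Equiv.injective _), h]

lemma allFailed_image {n : ℕ} (π : Equiv.Perm (Fin n)) (S : Finset (Fin n)) (j : ℕ) :
    allFailed n (S.image π) j = (allFailed n S j).image (π * ·) := by
  ext σ
  obtain ⟨τ, rfl⟩ : ∃ τ, π * τ = σ := ⟨π⁻¹ * σ, by group⟩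
  simp [allFailed, tailSet_mul, disjoint_image (Equiv.injective π)]

lemma card_allFailed_of_card_eq {n : ℕ} {S T : Finset (Fin n)} (h : #S = #T) (j : ℕ) :
    #(allFailed n S j) = #(allFailed n T j) := by
  obtain ⟨π, rfl⟩ := exists_perm_image_eq h
  rw [allFailed_image, card_image_of_injective _ (mul_right_injective π)]

lemma inf'_allFailed {n : ℕ} {Γ : Finset (Finset (Fin n))} (hΓ : Γ.Nonempty) (j : ℕ) :
    Γ.inf' hΓ (allFailed n · j) = allFailed n (Γ.sup id) j := by
  ext σ
  simp [allFailed, Finset.disjoint_sup_left]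

lemma failSet_phiOmega {n : ℕ} (Ω : Finset (Finset (Fin n))) (j : ℕ) :
    failSet n (phiOmega n Ω) j = Ω.biUnion (allFailed n · j) := by
  ext σ
  simp [failSet, allFailed, phiOmega, subset_compl_iff_disjoint_right]

lemma failSet_phiParallel (n m : ℕ) (j : ℕ) :
    failSet n (phiParallel n m) j = allFailed n (univ.filter fun k : Fin n => k.1 < m) j := by
  ext σ
  simp [failSet, allFailed, phiParallel, disjoint_right]

lemma card_failSet_phiParallel {n : ℕ} (S : Finset (Fin n)) (j : ℕ) :
    #(failSet n (phiParallel n #S) j) = #(allFailed n S j) := by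
  rw [failSet_phiParallel]
  refine card_allFailed_of_card_eq ?_ j
  rw [Fin.card_filter_val_lt, min_eq_right]
  simpa using card_le_univ S

lemma card_failSet_phiOmega {n : ℕ} (Ω : Finset (Finset (Fin n))) (j : ℕ) :
    (#(failSet n (phiOmega n Ω) j) : ℤ) =
      ∑ Γ ∈ Ω.powerset.filter (fun Γ => Γ ≠ ∅),
        (-1 : ℤ) ^ (#Γ + 1) * #(failSet n (phiParallel n #(Γ.sup id)) j) := by
  rw [failSet_phiOmega, inclusion_exclusion_card_biUnion]
  simp_rw [inf'_allFailed, card_failSet_phiParallel, ← nonempty_iff_ne_empty]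
  exact sum_coe_sort _ fun Γ => (-1 : ℤ) ^ (#Γ + 1) * (#(allFailed n (Γ.sup id) j) : ℤ)

theorem signature_inclusion_exclusion_general (n : ℕ) (Ω : Finset (Finset (Fin n))) :
    ∀ i : ℕ, (Nperm n (phiOmega n Ω) i : ℤ) =
      ∑ Γ ∈ Ω.powerset.filter (fun Γ => Γ ≠ ∅),
        (-1 : ℤ) ^ (Γ.card + 1) * Nperm n (phiParallel n (Γ.sup id).card) i := by
  intro i
  simp_rw [Nperm_eq_card_failSet_sub (phiOmega_monotone Ω),
    Nperm_eq_card_failSet_sub (phiParallel_monotone n _), card_failSet_phiOmega, mul_sub,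
    sum_sub_distrib]

/-- Inclusion–exclusion for signatures: for the system with minimal cut sets Ω̄,
N_i(φ_Ω̄) = Σ_{∅ ≠ Γ ⊆ Ω̄} (-1)^{|Γ|+1} N_i(φ*_{|∪Γ|}). -/
theorem signature_inclusion_exclusion (n : ℕ) (Ω : Finset (Finset (Fin n)))
    (hne : Ω.Nonempty) (hempty : ∅ ∉ Ω)
    (hanti : IsAntichain (· ⊆ ·) (↑Ω : Set (Finset (Fin n)))) :
    ∀ i : ℕ, (Nperm n (phiOmega n Ω) i : ℤ) =
      ∑ Γ ∈ Ω.powerset.filter (fun Γ => Γ ≠ ∅),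
        (-1 : ℤ) ^ (Γ.card + 1) * Nperm n (phiParallel n (Γ.sup id).card) i :=
  signature_inclusion_exclusion_general n Ω
end

section
/- (Kruskal–Katona, shadow bound) Let A be a family of k distinct l-element subsets of a finite set, with k = C(n_l, l) + C(n_{l-1}, l-1) + ... + C(n_j, j) the l-cascade representation of k (n_l > ... > n_j ≥ j ≥ 1). Then the shadow ∂A = { B : |B| = l-1, B ⊂ A for some A ∈ A } satisfies |∂A| ≥ C(n_l, l-1) + C(n_{l-1}, l-2) + ... + C(n_j, j-1), and this bound is attained by some family of k l-subsets. -/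
open Finset

/-- `IsCascade l k j a` says that `a j < a (j+1) < ... < a l`, `a j ≥ j ≥ 1`,
`a` vanishes outside `[j, l]`, and `k = C(a l, l) + ... + C(a j, j)`:
the l-cascade (binomial) representation of k. -/
def IsCascade (l k : ℕ) (j : ℕ) (a : ℕ → ℕ) : Prop :=
  1 ≤ j ∧ j ≤ l ∧ (∀ t, j ≤ t → t < l → a t < a (t + 1)) ∧ j ≤ a j ∧
  (∀ t, t < j ∨ l < t → a t = 0) ∧
  k = ∑ t ∈ Finset.Icc j l, (a t).choose t

/-!
For `t = j, ..., l` let the `t`-th block consist of the sets `S ∪ {a (t+1), ..., a l}` with `S` a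
`t`-subset of `{0, ..., a t - 1}`. These `∑ C(a t, t) = k` sets of size `l` form an initial segment
of the colex order, and the shadow of their union is the same construction with `(t-1)`-subsets,
of size `∑ C(a t, t-1)`. Mathlib's Kruskal–Katona theorem says that colex initial segments have the
smallest shadow among families of `l`-sets of a given size in `Fin n`; an arbitrary family and this
initial segment can both be moved into a common `Fin n` without changing sizes or shadows.
-/

open scoped FinsetFamily

namespace Finset

variable {α β : Type*}

lemma shadow_map [DecidableEq α] [DecidableEq β] (f : α ↪ β) (𝒜 : Finset (Finset α)) :
    ∂ (𝒜.map (mapEmbedding f).toEmbedding) = (∂ 𝒜).map (mapEmbedding f).toEmbedding := by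
  ext t
  simp only [mem_shadow_iff, mem_map, RelEmbedding.coe_toEmbedding, mapEmbedding_apply]
  constructor
  · rintro ⟨_, ⟨s, hs, rfl⟩, _, hfx, rfl⟩
    obtain ⟨x, hx, rfl⟩ := mem_map.1 hfx
    exact ⟨s.erase x, ⟨s, hs, x, hx, rfl⟩, map_erase f s x⟩
  · rintro ⟨_, ⟨s, hs, x, hx, rfl⟩, rfl⟩
    exact ⟨s.map f, ⟨s, hs, rfl⟩, f x, mem_map_of_mem f hx, (map_erase f s x).symm⟩

lemma card_shadow_map [DecidableEq α] [DecidableEq β] (f : α ↪ β) (𝒜 : Finset (Finset α)) :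
    #(∂ (𝒜.map (mapEmbedding f).toEmbedding)) = #(∂ 𝒜) := by
  rw [shadow_map, card_map]

lemma sized_map_mapEmbedding_iff {f : α ↪ β} {𝒜 : Finset (Finset α)} {r : ℕ} :
    (𝒜.map (mapEmbedding f).toEmbedding : Set (Finset β)).Sized r ↔
      (𝒜 : Set (Finset α)).Sized r := by
  simp [Set.Sized]

lemma exists_map_mapEmbedding_eq (f : α ↪ β) {𝒜 : Finset (Finset β)}
    (h𝒜 : ∀ s ∈ 𝒜, ↑s ⊆ Set.range f) :
    ∃ 𝒜' : Finset (Finset α), 𝒜'.map (mapEmbedding f).toEmbedding = 𝒜 := by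
  classical
  refine ⟨𝒜.image fun s => s.preimage f f.injective.injOn, ?_⟩
  ext s
  simp only [mem_map, mem_image, RelEmbedding.coe_toEmbedding, mapEmbedding_apply]
  constructor
  · rintro ⟨_, ⟨s, hs, rfl⟩, rfl⟩
    rwa [map_eq_image, image_preimage, filter_true_of_mem fun x hx => h𝒜 s hs hx]
  · intro hs
    refine ⟨_, ⟨s, hs, rfl⟩, ?_⟩
    rw [map_eq_image, image_preimage, filter_true_of_mem fun x hx => h𝒜 s hs hx]

namespace Colex
variable [LinearOrder α] [LinearOrder β]

lemma IsInitSeg.of_map {f : α ↪o β} {𝒜 : Finset (Finset α)} {r : ℕ}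
    (h : IsInitSeg (𝒜.map (mapEmbedding f.toEmbedding).toEmbedding) r) : IsInitSeg 𝒜 r := by
  refine ⟨sized_map_mapEmbedding_iff.1 h.1, fun s t hs ⟨hts, ht⟩ => ?_⟩
  have := h.2 (mem_map_of_mem _ hs) (t := t.map f.toEmbedding) ⟨?_, by simpa using ht⟩
  · simpa using this
  · simpa only [RelEmbedding.coe_toEmbedding, mapEmbedding_apply, map_eq_image,
      toColex_image_lt_toColex_image f.strictMono]

end Colex

theorem card_shadow_le_of_isInitSeg [DecidableEq α] {r : ℕ} {𝒜 : Finset (Finset α)}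
    {𝒞 : Finset (Finset ℕ)} (h𝒜 : (𝒜 : Set (Finset α)).Sized r) (h𝒞 : Colex.IsInitSeg 𝒞 r)
    (hcard : #𝒞 ≤ #𝒜) : #(∂ 𝒞) ≤ #(∂ 𝒜) := by
  obtain ⟨N, hN⟩ := exists_nat_subset_range (𝒞.sup id)
  set V := 𝒜.sup id
  obtain ⟨𝒜', h𝒜'⟩ := exists_map_mapEmbedding_eq (Function.Embedding.subtype (· ∈ V)) (𝒜 := 𝒜)
    fun s hs x hx => ⟨⟨x, le_sup (f := id) hs hx⟩, rfl⟩
  rw [← h𝒜'] at h𝒜 hcard ⊢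
  obtain ⟨𝒞', rfl⟩ := exists_map_mapEmbedding_eq (Fin.valOrderEmb (N + #V)).toEmbedding
    (𝒜 := 𝒞) fun s hs x hx =>
      ⟨⟨x, by have := mem_range.1 (hN (le_sup (f := id) hs hx)); omega⟩, rfl⟩
  obtain ⟨e⟩ : Nonempty (V ↪ Fin (N + #V)) := Function.Embedding.nonempty_of_card_le (by simp)
  rw [card_map, card_map, ← card_map (mapEmbedding e).toEmbedding] at hcard
  rw [card_shadow_map, card_shadow_map, ← card_shadow_map e]
  exact kruskal_katona (sized_map_mapEmbedding_iff.2 (sized_map_mapEmbedding_iff.1 h𝒜)) hcard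
    h𝒞.of_map

end Finset

namespace Cascade

def tail (a : ℕ → ℕ) (l t : ℕ) : Finset ℕ := (Ioc t l).image a

def block (a : ℕ → ℕ) (l c t : ℕ) : Finset (Finset ℕ) :=
  ((range (a t)).powersetCard c).image (· ∪ tail a l t)

def family (a : ℕ → ℕ) (j l : ℕ) (c : ℕ → ℕ) : Finset (Finset ℕ) :=
  (Icc j l).biUnion fun t => block a l (c t) t

variable {a : ℕ → ℕ} {j l c c' t t' : ℕ} {s u : Finset ℕ}

lemma mem_family {c : ℕ → ℕ} : u ∈ family a j l c ↔ ∃ t ∈ Icc j l, u ∈ block a l (c t) t :=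
  mem_biUnion

section
variable (ha : StrictMonoOn a (Set.Icc j l))
include ha

lemma lt_of_mem_tail (ht : t ∈ Set.Icc j l) {x : ℕ} (hx : x ∈ tail a l t) : a t < x := by
  obtain ⟨t', ht', rfl⟩ := mem_image.1 hx
  rw [mem_Ioc] at ht'
  exact ha ht ⟨ht.1.trans ht'.1.le, ht'.2⟩ ht'.1

lemma mem_tail_iff_of_lt (ht : t ∈ Set.Icc j l) (ht' : t' ∈ Set.Ioc t l) {x : ℕ} (hx : a t' < x) :
    x ∈ tail a l t ↔ x ∈ tail a l t' := by
  obtain ⟨hjt, -⟩ := ht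
  obtain ⟨htt', ht'l⟩ := ht'
  simp only [tail, mem_image, mem_Ioc]
  constructor
  · rintro ⟨i, hi, rfl⟩
    exact ⟨i, ⟨(ha.lt_iff_lt ⟨by omega, ht'l⟩ ⟨by omega, hi.2⟩).1 hx, hi.2⟩, rfl⟩
  · rintro ⟨i, hi, rfl⟩
    exact ⟨i, ⟨by omega, hi.2⟩, rfl⟩

lemma card_tail (ht : t ∈ Set.Icc j l) : #(tail a l t) = l - t := by
  rw [tail, card_image_of_injOn, Nat.card_Ioc]
  exact ha.injOn.mono fun i hi => by
    simp only [coe_Ioc, Set.mem_Ioc] at hi; exact ⟨ht.1.trans hi.1.le, hi.2⟩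

lemma mem_block_iff (ht : t ∈ Set.Icc j l) :
    u ∈ block a l c t ↔
      #u = c + (l - t) ∧ a t ∉ u ∧ ∀ x, a t < x → (x ∈ u ↔ x ∈ tail a l t) := by
  have htail := fun x => lt_of_mem_tail ha ht (x := x)
  constructor
  · simp only [block, mem_image, mem_powersetCard, subset_iff, mem_range]
    rintro ⟨S, ⟨hS, rfl⟩, rfl⟩
    refine ⟨?_, ?_, fun x hx => ?_⟩
    · rw [card_union_of_disjoint (disjoint_left.2 fun x hxS hxT => ?_), card_tail ha ht]
      exact (hS hxS).not_gt (htail x hxT)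
    · simp only [mem_union, not_or]
      exact ⟨fun h => (hS h).false, fun h => (htail _ h).false⟩
    · simp only [mem_union, or_iff_right_iff_imp]
      exact fun h => absurd (hS h) hx.not_gt
  · rintro ⟨hcard, hat, hu⟩
    have hdisj : Disjoint {x ∈ u | x < a t} (tail a l t) :=
      disjoint_left.2 fun x hx hxT => (mem_filter.1 hx).2.not_gt (htail x hxT)
    have hsplit : {x ∈ u | x < a t} ∪ tail a l t = u := by
      ext x
      rcases lt_trichotomy x (a t) with h | rfl | h
      · simp [h, (htail x).mt h.not_gt]
      · simp [hat, (htail _).mt (lt_irrefl _)]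
      · simp [h.not_gt, hu x h]
    refine mem_image.2
      ⟨_, mem_powersetCard.2 ⟨fun x hx => mem_range.2 (mem_filter.1 hx).2, ?_⟩, hsplit⟩
    have := card_union_of_disjoint hdisj
    rw [hsplit, card_tail ha ht] at this
    omega

lemma card_block (ht : t ∈ Set.Icc j l) : #(block a l c t) = (a t).choose c := by
  rw [block, card_image_of_injOn, card_powersetCard, card_range]
  have hdisj {S : Finset ℕ} (hS : S ∈ (range (a t)).powersetCard c) : Disjoint S (tail a l t) :=
    disjoint_left.2 fun x hxS hxT =>
      (mem_range.1 ((mem_powersetCard.1 hS).1 hxS)).not_gt (lt_of_mem_tail ha ht hxT)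
  intro S hS T hT (hST : S ∪ tail a l t = T ∪ tail a l t)
  rw [← union_sdiff_cancel_right (hdisj hS), hST, union_sdiff_cancel_right (hdisj hT)]

lemma disjoint_block (ht : t ∈ Set.Icc j l) (ht' : t' ∈ Set.Ioc t l) :
    Disjoint (block a l c t) (block a l c' t') := by
  have ht'' : t' ∈ Set.Icc j l := ⟨ht.1.trans ht'.1.le, ht'.2⟩
  refine disjoint_left.2 fun u hu hu' => ((mem_block_iff ha ht'').1 hu').2.1 ?_
  exact ((mem_block_iff ha ht).1 hu).2.2 _ (ha ht ht'' ht'.1) |>.2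
    (mem_image_of_mem a (mem_Ioc.2 ht'))

lemma card_family {c : ℕ → ℕ} : #(family a j l c) = ∑ t ∈ Icc j l, (a t).choose (c t) := by
  rw [family, card_biUnion]
  · exact sum_congr rfl fun t ht => card_block ha (mem_Icc.1 ht)
  · intro t ht t' ht' hne
    rw [mem_coe, mem_Icc] at ht ht'
    rcases hne.lt_or_gt with h | h
    · exact disjoint_block ha ht ⟨h, ht'.2⟩
    · exact (disjoint_block ha ht' ⟨h, ht.2⟩).symm

/-- Covers both `u < s` in colex (with `w` the colex witness) and `u = s.erase w`. -/
lemma mem_family_of_agree (ht : t ∈ Set.Icc j l) (hs : s ∈ block a l c t) {w : ℕ} (hws : w ∈ s)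
    (hwu : w ∉ u) (hsu : ∀ x, w < x → (x ∈ u ↔ x ∈ s)) {c' : ℕ → ℕ}
    (hu : ∀ t' ∈ Set.Icc j l, #u = c' t' + (l - t')) : u ∈ family a j l c' := by
  obtain ⟨-, hat, hs⟩ := (mem_block_iff ha ht).1 hs
  rcases lt_trichotomy w (a t) with hw | rfl | hw
  · refine mem_family.2 ⟨t, mem_Icc.2 ht, (mem_block_iff ha ht).2 ⟨hu t ht, ?_, ?_⟩⟩
    · exact fun h => hat ((hsu _ hw).1 h)
    · exact fun x hx => (hsu x (hw.trans hx)).trans (hs x hx)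
  · exact absurd hws hat
  · obtain ⟨t', ht', rfl⟩ := mem_image.1 ((hs _ hw).1 hws)
    rw [mem_Ioc] at ht'
    have ht'' : t' ∈ Set.Icc j l := ⟨ht.1.trans ht'.1.le, ht'.2⟩
    refine mem_family.2 ⟨t', mem_Icc.2 ht'', (mem_block_iff ha ht'').2 ⟨hu t' ht'', hwu, ?_⟩⟩
    exact fun x hx => (hsu x hx).trans <| (hs x (hw.trans hx)).trans <|
      mem_tail_iff_of_lt ha ht ht' hx

lemma sized_family : (family a j l fun t => t : Set (Finset ℕ)).Sized l := by
  intro u hu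
  obtain ⟨t, ht, hu⟩ := mem_family.1 hu
  rw [mem_Icc] at ht
  rw [((mem_block_iff ha ht).1 hu).1]
  omega

lemma isInitSeg_family : Colex.IsInitSeg (family a j l fun t => t) l := by
  refine ⟨sized_family ha, fun s u hs ⟨hlt, hu⟩ => ?_⟩
  obtain ⟨t, ht, hs⟩ := mem_family.1 hs
  obtain ⟨w, hw, hfilter⟩ := Colex.lt_iff_exists_filter_lt.1 hlt
  rw [mem_sdiff] at hw
  refine mem_family_of_agree ha (mem_Icc.1 ht) hs hw.1 hw.2 (fun x hx => ?_) fun t' ht' => ?_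
  · simpa [hx] using Finset.ext_iff.1 hfilter x
  · rw [hu]
    have := ht'.2
    omega

lemma le_apply_of_mem_Icc (haj : j ≤ a j) (ht : t ∈ Set.Icc j l) : t ≤ a t := by
  obtain ⟨hjt, htl⟩ := ht
  induction t, hjt using Nat.le_induction with
  | base => exact haj
  | succ t hjt ih =>
    have := ha ⟨hjt, by omega⟩ ⟨by omega, htl⟩ (Nat.lt_succ_self t)
    have := ih (by omega)
    omega

lemma shadow_family (hj : 1 ≤ j) (haj : j ≤ a j) :
    ∂ (family a j l fun t => t) = family a j l fun t => t - 1 := by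
  ext u
  constructor
  · rw [mem_shadow_iff]
    rintro ⟨s, hs, x, hx, rfl⟩
    have hsl := sized_family ha hs
    obtain ⟨t, ht, hs⟩ := mem_family.1 hs
    refine mem_family_of_agree ha (mem_Icc.1 ht) hs hx (notMem_erase x s)
      (fun y hy => by simp [hy.ne']) fun t' ht' => ?_
    rw [card_erase_of_mem hx, hsl]
    obtain ⟨hjt', ht'l⟩ := ht'
    omega
  · intro hu
    obtain ⟨t, ht, hu⟩ := mem_family.1 hu
    rw [mem_Icc] at ht
    obtain ⟨S, hS, rfl⟩ := mem_image.1 hu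
    rw [mem_powersetCard] at hS
    obtain ⟨y, hy, hyS⟩ := not_subset.1 fun h : range (a t) ⊆ S => by
      have := card_le_card h
      have := le_apply_of_mem_Icc ha haj ht
      rw [card_range, hS.2] at *
      omega
    have hyT : y ∉ tail a l t := fun h => (mem_range.1 hy).not_gt (lt_of_mem_tail ha ht h)
    refine mem_shadow_iff_insert_mem.2 ⟨y, by simp [hyS, hyT], mem_family.2 ⟨t, mem_Icc.2 ht, ?_⟩⟩
    refine mem_image.2
      ⟨insert y S, mem_powersetCard.2 ⟨insert_subset hy hS.1, ?_⟩, insert_union _ _ _⟩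
    rw [card_insert_of_notMem hyS, hS.2]
    omega

end
end Cascade

theorem kruskal_katona_shadow_general (k l j : ℕ) (a : ℕ → ℕ)
    (hcas : IsCascade l k j a) :
    (∀ {α : Type} [DecidableEq α] (A : Finset (Finset α)),
      (∀ s ∈ A, s.card = l) → A.card = k →
        ∑ t ∈ Finset.Icc j l, (a t).choose (t - 1) ≤ (Finset.shadow A).card) ∧
    (∃ B : Finset (Finset ℕ), (∀ s ∈ B, s.card = l) ∧ B.card = k ∧
      (Finset.shadow B).card = ∑ t ∈ Finset.Icc j l, (a t).choose (t - 1)) := by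
  obtain ⟨hj, -, hmono, haj, -, rfl⟩ := hcas
  have ha : StrictMonoOn a (Set.Icc j l) :=
    strictMonoOn_of_lt_add_one Set.ordConnected_Icc fun t _ ht ht' =>
      hmono t ht.1 (Nat.lt_of_succ_le ht'.2)
  have hcard := Cascade.card_family ha (c := fun t => t)
  have hshadow := Cascade.shadow_family ha hj haj
  refine ⟨fun A hA hAcard => ?_, _, Cascade.sized_family ha, hcard, ?_⟩
  · rw [← Cascade.card_family ha, ← hshadow]
    exact card_shadow_le_of_isInitSeg hA (Cascade.isInitSeg_family ha) (hcard.trans hAcard.symm).le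
  · rw [hshadow, Cascade.card_family ha]

/-- Kruskal–Katona shadow bound: if A is a family of k distinct l-subsets and
k = C(n_l,l)+...+C(n_j,j) is the l-cascade representation of k, then the shadow
of A has at least C(n_l,l-1)+...+C(n_j,j-1) members, and this bound is attained
by some family of k l-subsets. -/
theorem kruskal_katona_shadow (k l j : ℕ) (a : ℕ → ℕ) (hk : 0 < k)
    (hcas : IsCascade l k j a) :
    (∀ {α : Type} [DecidableEq α] (A : Finset (Finset α)),
      (∀ s ∈ A, s.card = l) → A.card = k →
        ∑ t ∈ Finset.Icc j l, (a t).choose (t - 1) ≤ (Finset.shadow A).card) ∧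
    (∃ B : Finset (Finset ℕ), (∀ s ∈ B, s.card = l) ∧ B.card = k ∧
      (Finset.shadow B).card = ∑ t ∈ Finset.Icc j l, (a t).choose (t - 1)) :=
  kruskal_katona_shadow_general k l j a hcas
end

section
/- (Kruskal–Katona, f-vector characterization) A vector (f_1, ..., f_n) of nonnegative integers is the f-vector of a simplicial complex on n vertices (f_l = number of faces of cardinality l) if and only if f_l ≤ C(n, l) for all l and, for each l with 2 ≤ l ≤ n and f_l > 0, writing f_l = C(n_l, l) + ... + C(n_j, j) as its l-cascade representation, one has f_{l-1} ≥ C(n_l, l-1) + ... + C(n_j, j-1). -/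
/-!
The colex rank of an `l`-set `{g 1 < ⋯ < g l} ⊆ Fin n` (the size of the colex initial segment it
ends) is `1 + ∑ C(g i, i)`. If the lowest `j` elements are the consecutive block
`a j - j, …, a j - 1` and the others are `a (j + 1), …, a l`, the hockey-stick identity folds the
block into `C(a j, j)`, so the rank is the cascade `∑ C(a t, t)`; the shadow of the segment is the
segment of the set with its minimum deleted, whose rank is then `∑ C(a t, t - 1)`. Every cascade
arises this way, and every set is of this form (take the longest block). Hence necessity is
Kruskal–Katona applied to the `l`-faces, compared with the initial segment of the same size; for
sufficiency take at each level `l` the initial segment of size `f l`: by the cascade condition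
the shadow of each level is an initial segment no larger than the level below, so lies in it, and
the union of the levels is a simplicial complex.
-/

open Finset

open Finset.Colex
open scoped FinsetFamily

lemma StrictMonoOn.card_image_Icc {α : Type*} [LinearOrder α] {l : ℕ} {g : ℕ → α}
    (hg : StrictMonoOn g (Set.Icc 1 l)) : #((Icc 1 l).image g) = l := by
  rw [card_image_of_injOn (by simpa using hg.injOn), Nat.card_Icc, Nat.add_sub_cancel]

namespace Finset.Colex

variable {n : ℕ}

lemma initSeg_empty {α : Type*} [LinearOrder α] [Fintype α] :
    initSeg (∅ : Finset α) = {∅} := by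
  ext t
  simp +contextual [mem_initSeg, eq_comm (a := 0), card_eq_zero]

lemma filter_notMem_initSeg {s : Finset (Fin n)} {m : Fin n} (hm : m ∈ s)
    (hmax : ∀ x ∈ s, x ≤ m) : {t ∈ initSeg s | m ∉ t} = powersetCard #s (Iio m) := by
  ext t
  simp only [mem_filter, mem_initSeg, mem_powersetCard]
  constructor
  · rintro ⟨⟨hcard, hts⟩, hmt⟩
    exact ⟨fun x hx => mem_Iio.2 ((forall_le_mono hts hmax x hx).lt_of_ne
      (ne_of_mem_of_not_mem hx hmt)), hcard.symm⟩
  · rintro ⟨hsub, hcard⟩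
    refine ⟨⟨hcard.symm, ?_⟩, fun h => by simpa using hsub h⟩
    exact (toColex_lt_singleton.2 fun x hx => mem_Iio.1 (hsub hx)).le.trans
      (singleton_le_toColex.2 ⟨m, hm, le_rfl⟩)

lemma notMem_of_mem_initSeg_erase {s u : Finset (Fin n)} {m : Fin n} (hmax : ∀ x ∈ s, x ≤ m)
    (hu : u ∈ initSeg (s.erase m)) : m ∉ u := fun hmu =>
  lt_irrefl m <| forall_lt_mono (mem_initSeg.1 hu).2
    (fun x hx => (hmax x (mem_of_mem_erase hx)).lt_of_ne (ne_of_mem_erase hx)) m hmu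

lemma filter_mem_initSeg {s : Finset (Fin n)} {m : Fin n} (hm : m ∈ s)
    (hmax : ∀ x ∈ s, x ≤ m) :
    {t ∈ initSeg s | m ∈ t} = (initSeg (s.erase m)).image (insert m) := by
  ext t
  simp only [mem_filter, mem_initSeg, mem_image]
  constructor
  · rintro ⟨⟨hcard, hts⟩, hmt⟩
    refine ⟨t.erase m, ⟨?_, ?_⟩, insert_erase hmt⟩
    · rw [card_erase_of_mem hm, card_erase_of_mem hmt, hcard]
    · simpa only [erase_eq] using (toColex_sdiff_le_toColex_sdiff
        (singleton_subset_iff.2 hmt) (singleton_subset_iff.2 hm)).2 hts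
  · rintro ⟨u, hu, rfl⟩
    have hmu := notMem_of_mem_initSeg_erase hmax (mem_initSeg.2 hu)
    obtain ⟨hcard, hus⟩ := hu
    refine ⟨⟨?_, ?_⟩, mem_insert_self m u⟩
    · rw [card_insert_of_notMem hmu, ← hcard, card_erase_add_one hm]
    · rw [← toColex_sdiff_le_toColex_sdiff (singleton_subset_iff.2 (mem_insert_self m u))
        (singleton_subset_iff.2 hm), ← erase_eq, ← erase_eq, erase_insert hmu]
      exact hus

lemma card_initSeg_eq_choose_add {s : Finset (Fin n)} {m : Fin n} (hm : m ∈ s)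
    (hmax : ∀ x ∈ s, x ≤ m) :
    #(initSeg s) = (m : ℕ).choose #s + #(initSeg (s.erase m)) := by
  rw [← card_filter_add_card_filter_not (m ∈ ·), filter_mem_initSeg hm hmax,
    filter_notMem_initSeg hm hmax, card_powersetCard, Fin.card_Iio, add_comm,
    card_image_of_injOn]
  intro u hu v hv huv
  rw [← erase_insert (notMem_of_mem_initSeg_erase hmax hu), huv,
    erase_insert (notMem_of_mem_initSeg_erase hmax hv)]

theorem card_initSeg_image_Icc {l : ℕ} {g : ℕ → Fin n} (hg : StrictMonoOn g (Set.Icc 1 l)) :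
    #(initSeg ((Icc 1 l).image g)) = 1 + ∑ i ∈ Icc 1 l, (g i : ℕ).choose i := by
  induction l with
  | zero => simp [initSeg_empty]
  | succ l ih =>
    have hg' : StrictMonoOn g (Set.Icc 1 l) := hg.mono (Set.Icc_subset_Icc_right l.le_succ)
    have hmax : ∀ x ∈ (Icc 1 (l + 1)).image g, x ≤ g (l + 1) := by
      simp only [mem_image, mem_Icc, forall_exists_index, and_imp]
      rintro _ i hi hil rfl
      exact hg.monotoneOn ⟨hi, hil⟩ ⟨by omega, le_rfl⟩ hil
    have hnotMem : g (l + 1) ∉ (Icc 1 l).image g := by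
      simp only [mem_image, mem_Icc, not_exists, not_and]
      exact fun i ⟨hi, hil⟩ => (hg ⟨hi, by omega⟩ ⟨by omega, le_rfl⟩ (by omega)).ne
    have himage : (Icc 1 (l + 1)).image g = insert (g (l + 1)) ((Icc 1 l).image g) := by
      rw [← insert_Icc_right_eq_Icc_add_one (by omega), image_insert]
    rw [card_initSeg_eq_choose_add (mem_image_of_mem g (by simp)) hmax, hg.card_image_Icc,
      himage, erase_insert hnotMem, ih hg', sum_Icc_succ_top (by omega)]
    ring

theorem card_shadow_initSeg_image_Icc {l : ℕ} {g : ℕ → Fin n} (hl : 1 ≤ l)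
    (hg : StrictMonoOn g (Set.Icc 1 l)) :
    #(∂ (initSeg ((Icc 1 l).image g))) = 1 + ∑ i ∈ Icc 1 (l - 1), (g (i + 1) : ℕ).choose i := by
  have hne : ((Icc 1 l).image g).Nonempty := by simp [hl]
  have hmin : ((Icc 1 l).image g).min' hne = g 1 := by
    refine (isLeast_min' _ hne).unique ⟨mem_image_of_mem g (by simp [hl]), ?_⟩
    simp only [mem_lowerBounds, coe_image, coe_Icc, Set.mem_image, Set.mem_Icc,
      forall_exists_index, and_imp]
    rintro _ i hi hil rfl
    exact hg.monotoneOn ⟨le_rfl, hl⟩ ⟨hi, hil⟩ hi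
  have hshift : (Icc 1 l).image g = insert (g 1) ((Icc 1 (l - 1)).image (fun i => g (i + 1))) := by
    rw [← insert_Icc_add_one_left_eq_Icc hl, image_insert]
    change _ = insert _ ((Icc 1 (l - 1)).image (g ∘ (· + 1)))
    rw [← image_image, image_add_right_Icc, Nat.sub_add_cancel hl]
  have hnotMem : g 1 ∉ (Icc 1 (l - 1)).image (fun i => g (i + 1)) := by
    simp only [mem_image, mem_Icc, not_exists, not_and]
    exact fun i ⟨hi, hil⟩ => (hg ⟨le_rfl, hl⟩ ⟨by omega, by omega⟩ (by omega)).ne'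
  rw [shadow_initSeg hne, hmin, hshift, erase_insert hnotMem, card_initSeg_image_Icc]
  exact fun x ⟨hx, hxl⟩ y ⟨hy, hyl⟩ hxy => hg ⟨by omega, by omega⟩ ⟨by omega, by omega⟩ (by omega)

end Finset.Colex

lemma one_add_sum_Icc_choose (b j : ℕ) :
    1 + ∑ i ∈ Icc 1 j, (b + i - 1).choose i = (b + j).choose j := by
  induction j with
  | zero => simp
  | succ j ih =>
    rw [sum_Icc_succ_top (by omega), ← add_assoc, ih, ← add_assoc, Nat.add_sub_cancel,
      Nat.choose_succ_succ' (b + j) j]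

def cascadeSeq (j : ℕ) (a : ℕ → ℕ) (i : ℕ) : ℕ := if i ≤ j then a j - j + i - 1 else a i

/-- By the hockey-stick identity the block contributes `C(a j, j)`. -/
theorem one_add_sum_choose_eq_of_eq_cascadeSeq {j l : ℕ} {a g : ℕ → ℕ} (hjl : j ≤ l)
    (hja : j ≤ a j) (hg : ∀ i ∈ Icc 1 l, g i = cascadeSeq j a i) :
    1 + ∑ i ∈ Icc 1 l, (g i).choose i = ∑ t ∈ Icc j l, (a t).choose t := by
  have hblock : ∑ i ∈ Icc 1 j, (g i).choose i = ∑ i ∈ Icc 1 j, (a j - j + i - 1).choose i :=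
    sum_congr rfl fun i hi => by
      simp only [mem_Icc] at hi
      rw [hg i (mem_Icc.2 ⟨hi.1, by omega⟩), cascadeSeq, if_pos hi.2]
  have htop : ∑ i ∈ Ioc j l, (g i).choose i = ∑ t ∈ Ioc j l, (a t).choose t :=
    sum_congr rfl fun i hi => by
      simp only [mem_Ioc] at hi
      rw [hg i (mem_Icc.2 ⟨by omega, hi.2⟩), cascadeSeq, if_neg (by omega)]
  have hIcc (b : ℕ) : Icc 1 b = Ioc 0 b := Icc_add_one_left_eq_Ioc 0 b
  rw [hIcc, ← sum_Ioc_consecutive _ j.zero_le hjl, ← hIcc, hblock, htop, ← add_assoc,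
    one_add_sum_Icc_choose, Nat.sub_add_cancel hja, Icc_eq_cons_Ioc hjl, sum_cons]

theorem one_add_sum_choose_succ_eq_of_eq_cascadeSeq {j l : ℕ} {a g : ℕ → ℕ} (hj : 1 ≤ j)
    (hjl : j ≤ l) (hja : j ≤ a j) (hg : ∀ i ∈ Icc 1 l, g i = cascadeSeq j a i) :
    1 + ∑ i ∈ Icc 1 (l - 1), (g (i + 1)).choose i = ∑ t ∈ Icc j l, (a t).choose (t - 1) := by
  have hshift : ∀ i ∈ Icc 1 (l - 1),
      g (i + 1) = cascadeSeq (j - 1) (fun t => a (t + 1)) i := fun i hi => by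
    simp only [mem_Icc] at hi
    rw [hg (i + 1) (mem_Icc.2 ⟨by omega, by omega⟩), cascadeSeq, cascadeSeq,
      Nat.sub_add_cancel hj]
    split_ifs <;> omega
  rw [one_add_sum_choose_eq_of_eq_cascadeSeq (by omega) (by rw [Nat.sub_add_cancel hj]; omega)
    hshift]
  refine sum_nbij' (· + 1) (· - 1) ?_ ?_ ?_ ?_ ?_ <;> intro t ht <;> simp only [mem_Icc] at ht ⊢
  all_goals first | omega | simp

lemma IsCascade.strictMonoOn_cascadeSeq {l k j : ℕ} {a : ℕ → ℕ} (h : IsCascade l k j a) :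
    StrictMonoOn (cascadeSeq j a) (Set.Icc 1 l) := by
  obtain ⟨hj, hjl, hmono, hja, -, -⟩ := h
  refine strictMonoOn_of_lt_succ Set.ordConnected_Icc fun i _ hi hi' => ?_
  rw [Order.succ_eq_add_one] at hi' ⊢
  simp only [Set.mem_Icc] at hi hi'
  unfold cascadeSeq
  split_ifs with h1 h2 h2
  · omega
  · obtain rfl : i = j := by omega
    have := hmono i le_rfl (by omega)
    omega
  · omega
  · exact hmono i (by omega) (by omega)

lemma StrictMonoOn.add_sub_le {l s t : ℕ} {g : ℕ → ℕ} (hg : StrictMonoOn g (Set.Icc 1 l))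
    (hs : 1 ≤ s) (hst : s ≤ t) (ht : t ≤ l) : g s + (t - s) ≤ g t := by
  induction t, hst using Nat.le_induction with
  | base => simp
  | succ t hst ih =>
    have := hg ⟨by omega, by omega⟩ ⟨by omega, ht⟩ (lt_add_one t)
    have := ih (by omega)
    omega

/-- The first block of `g` is its longest run of consecutive values starting at `g 1`. -/
theorem exists_isCascade_of_strictMonoOn {l : ℕ} {g : ℕ → ℕ} (hl : 1 ≤ l)
    (hg : StrictMonoOn g (Set.Icc 1 l)) :
    ∃ j a, IsCascade l (∑ t ∈ Icc j l, (a t).choose t) j a ∧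
      ∀ i ∈ Icc 1 l, g i = cascadeSeq j a i := by
  set j := Nat.findGreatest (fun t => g t + 1 = g 1 + t) l
  have hj : 1 ≤ j := Nat.le_findGreatest hl rfl
  have hjl : j ≤ l := Nat.findGreatest_le l
  have hgj : g j + 1 = g 1 + j := Nat.findGreatest_spec (P := fun t => g t + 1 = g 1 + t) hl rfl
  have hgap : j < l → g j + 2 ≤ g (j + 1) := fun hjl' => by
    have : g j < g (j + 1) := hg ⟨hj, hjl⟩ ⟨by omega, hjl'⟩ (lt_add_one j)
    have : ¬ g (j + 1) + 1 = g 1 + (j + 1) :=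
      Nat.findGreatest_is_greatest (P := fun t => g t + 1 = g 1 + t) (lt_add_one j) hjl'
    omega
  have hblock : ∀ i, 1 ≤ i → i ≤ j → g i + 1 = g 1 + i := fun i hi hij => by
    have := hg.add_sub_le le_rfl hi (hij.trans hjl)
    have := hg.add_sub_le hi hij hjl
    omega
  refine ⟨j, fun t => if t < j ∨ l < t then 0 else if t = j then g j + 1 else g t,
    ⟨hj, hjl, fun t ht htl => ?_, by simp [not_lt.2 hjl]; omega, fun t ht => by simp [ht], rfl⟩,
    fun i hi => ?_⟩
  · dsimp only
    rcases ht.eq_or_lt with rfl | hjt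
    · have := hgap htl
      split_ifs <;> omega
    · have : g t < g (t + 1) := hg ⟨by omega, by omega⟩ ⟨by omega, by omega⟩ (lt_add_one t)
      split_ifs <;> omega
  · simp only [mem_Icc] at hi
    unfold cascadeSeq
    dsimp only
    by_cases hij : i ≤ j
    · have := hblock i hi.1 hij
      split_ifs <;> omega
    · split_ifs <;> omega

section InitSeg

variable {n : ℕ}

theorem IsCascade.exists_isInitSeg {l k j : ℕ} {a : ℕ → ℕ} (h : IsCascade l k j a)
    (hk : k ≤ n.choose l) :
    ∃ 𝒞 : Finset (Finset (Fin n)), IsInitSeg 𝒞 l ∧ #𝒞 = k ∧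
      #(∂ 𝒞) = ∑ t ∈ Icc j l, (a t).choose (t - 1) := by
  have hv := h.strictMonoOn_cascadeSeq
  obtain ⟨hj, hjl, -, hja, -, hka⟩ := h
  set v := cascadeSeq j a
  have hrank : 1 + ∑ i ∈ Icc 1 l, (v i).choose i = k := by
    rw [hka]; exact one_add_sum_choose_eq_of_eq_cascadeSeq hjl hja fun _ _ => rfl
  have hvl : v l < n := by
    by_contra! hnl
    have hn := Nat.choose_le_choose l hnl
    have hvk : (v l).choose l ≤ ∑ i ∈ Icc 1 l, (v i).choose i :=
      single_le_sum (f := fun i => (v i).choose i) (fun _ _ => Nat.zero_le _)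
        (mem_Icc.2 ⟨by omega, le_rfl⟩)
    omega
  -- `v` clamped into `Fin n`; the clamp is inactive on `[1, l]`
  let g : ℕ → Fin n := fun i => ⟨min (v i) (v l), (min_le_right _ _).trans_lt hvl⟩
  have hgv : ∀ i ∈ Set.Icc 1 l, (g i : ℕ) = v i := fun i hi =>
    min_eq_left (hv.monotoneOn hi ⟨by omega, le_rfl⟩ hi.2)
  have hg : StrictMonoOn g (Set.Icc 1 l) := fun x hx y hy hxy => by
    rw [Fin.lt_def, hgv x hx, hgv y hy]; exact hv hx hy hxy
  refine ⟨initSeg ((Icc 1 l).image g), ?_, ?_, ?_⟩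
  · simpa only [hg.card_image_Icc] using isInitSeg_initSeg (s := (Icc 1 l).image g)
  · rw [card_initSeg_image_Icc hg, ← hrank]
    exact congrArg _ (sum_congr rfl fun i hi => by rw [hgv i (by simpa using hi)])
  · rw [card_shadow_initSeg_image_Icc (by omega) hg,
      ← one_add_sum_choose_succ_eq_of_eq_cascadeSeq hj hjl hja (g := v) fun _ _ => rfl]
    exact congrArg _ (sum_congr rfl fun i hi => by
      simp only [mem_Icc] at hi
      rw [hgv (i + 1) ⟨by omega, by omega⟩])

lemma Finset.exists_strictMonoOn_image_Icc_eq {α : Type*} [LinearOrder α] {s : Finset α}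
    (hs : s.Nonempty) : ∃ g : ℕ → α, StrictMonoOn g (Set.Icc 1 #s) ∧ (Icc 1 #s).image g = s := by
  have hs' : 0 < #s := hs.card_pos
  let g : ℕ → α := fun i => s.orderEmbOfFin rfl ⟨min (i - 1) (#s - 1), by omega⟩
  have hg : StrictMonoOn g (Set.Icc 1 #s) := fun x hx y hy hxy =>
    (s.orderEmbOfFin rfl).strictMono (Fin.mk_lt_mk.2 (by simp only [Set.mem_Icc] at hx hy; omega))
  refine ⟨g, hg, eq_of_subset_of_card_le ?_ (hg.card_image_Icc).ge⟩
  simp only [subset_iff, mem_image, forall_exists_index, and_imp]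
  rintro _ i - rfl
  exact s.orderEmbOfFin_mem rfl _

theorem Finset.Colex.IsInitSeg.exists_isCascade {𝒞 : Finset (Finset (Fin n))} {l : ℕ}
    (h𝒞 : IsInitSeg 𝒞 l) (hl : 1 ≤ l) (hne : 𝒞.Nonempty) :
    ∃ j a, IsCascade l #𝒞 j a ∧ #(∂ 𝒞) = ∑ t ∈ Icc j l, (a t).choose (t - 1) := by
  obtain ⟨s, hsl, rfl⟩ := h𝒞.exists_initSeg hne
  obtain ⟨g, hg, rfl⟩ : ∃ g : ℕ → Fin n, StrictMonoOn g (Set.Icc 1 l) ∧ (Icc 1 l).image g = s :=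
    hsl ▸ exists_strictMonoOn_image_Icc_eq (card_pos.1 (by omega))
  obtain ⟨j, a, ha, hga⟩ := exists_isCascade_of_strictMonoOn (g := fun i => (g i : ℕ)) hl
    fun x hx y hy hxy => hg hx hy hxy
  have ⟨hj, hjl, _, hja, _⟩ := ha
  refine ⟨j, a, ?_, ?_⟩
  · rwa [card_initSeg_image_Icc hg, one_add_sum_choose_eq_of_eq_cascadeSeq hjl hja hga]
  · rw [card_shadow_initSeg_image_Icc hl hg,
      one_add_sum_choose_succ_eq_of_eq_cascadeSeq hj hjl hja hga]

end InitSeg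

section Families

variable {α : Type*}

lemma Finset.Colex.IsInitSeg.subset_of_card_le [LinearOrder α] {𝒜 ℬ : Finset (Finset α)}
    {r : ℕ} (h𝒜 : IsInitSeg 𝒜 r) (hℬ : IsInitSeg ℬ r) (h : #𝒜 ≤ #ℬ) : 𝒜 ⊆ ℬ :=
  (h𝒜.total hℬ).elim id fun hℬ𝒜 => (eq_of_subset_of_card_le hℬ𝒜 h).symm.subset

theorem Finset.Colex.exists_isInitSeg_card_eq [LinearOrder α] [Fintype α] {r k : ℕ}
    (hk : k ≤ (Fintype.card α).choose r) : ∃ 𝒞 : Finset (Finset α), IsInitSeg 𝒞 r ∧ #𝒞 = k := by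
  obtain rfl | hk₀ := k.eq_zero_or_pos
  · exact ⟨∅, isInitSeg_empty, rfl⟩
  obtain ⟨s, hs, hsk⟩ := surj_on_of_inj_on_of_card_le (s := powersetCard r univ)
    (t := Icc 1 ((Fintype.card α).choose r)) (fun s _ => #(initSeg s))
    (fun s hs => by
      rw [mem_powersetCard] at hs
      exact mem_Icc.2 ⟨card_pos.2 initSeg_nonempty, hs.2 ▸ isInitSeg_initSeg.1.card_le⟩)
    (fun s t hs ht hst => by
      rw [mem_powersetCard] at hs ht
      have hs' : IsInitSeg (initSeg s) r := hs.2 ▸ isInitSeg_initSeg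
      have ht' : IsInitSeg (initSeg t) r := ht.2 ▸ isInitSeg_initSeg
      have hst' := mem_initSeg.1 (hs'.subset_of_card_le ht' hst.le mem_initSeg_self)
      have hts' := mem_initSeg.1 (ht'.subset_of_card_le hs' hst.ge mem_initSeg_self)
      exact toColex_inj.1 (hst'.2.antisymm hts'.2))
    (by simp) k (mem_Icc.2 ⟨hk₀, hk⟩)
  rw [mem_powersetCard] at hs
  exact ⟨initSeg s, hs.2 ▸ isInitSeg_initSeg, hsk.symm⟩

variable [DecidableEq α]

lemma Finset.isLowerSet_of_shadow_subset {K : Finset (Finset α)} (hK : ∂ K ⊆ K) :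
    IsLowerSet (K : Set (Finset α)) := by
  suffices h : ∀ D B : Finset α, Disjoint B D → B ∪ D ∈ K → B ∈ K from
    fun A B hBA hA => h (A \ B) B disjoint_sdiff (by rwa [union_sdiff_of_subset hBA])
  intro D
  induction D using Finset.induction_on with
  | empty => simp
  | insert x D hxD ih =>
    intro B hBD hBDK
    have hxB : x ∉ B := disjoint_right.1 hBD (mem_insert_self x D)
    refine ih B (hBD.mono_right (subset_insert x D)) (hK (mem_shadow_iff.2 ?_))
    refine ⟨B ∪ insert x D, hBDK, x, by simp, ?_⟩
    rw [union_insert, erase_insert (by simp [hxB, hxD])]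

lemma IsLowerSet.shadow_slice_subset {K : Finset (Finset α)}
    (hK : IsLowerSet (K : Set (Finset α))) (l : ℕ) : ∂ (K.slice l) ⊆ K.slice (l - 1) := by
  intro B hB
  obtain ⟨A, hA, x, hx, rfl⟩ := mem_shadow_iff.1 hB
  rw [mem_slice] at hA ⊢
  exact ⟨hK (erase_subset x A) hA.1, by rw [card_erase_of_mem hx, hA.2]⟩

variable [Fintype α]

def Finset.ofSlices (𝒞 : ℕ → Finset (Finset α)) : Finset (Finset α) := {A | A ∈ 𝒞 #A}

lemma Finset.slice_ofSlices {𝒞 : ℕ → Finset (Finset α)}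
    (h𝒞 : ∀ r, (𝒞 r : Set (Finset α)).Sized r) (r : ℕ) : (ofSlices 𝒞).slice r = 𝒞 r := by
  ext A
  simp only [ofSlices, mem_slice, mem_filter, mem_univ, true_and]
  exact ⟨fun ⟨hA, hr⟩ => hr ▸ hA, fun hA => ⟨(h𝒞 r hA).symm ▸ hA, h𝒞 r hA⟩⟩

lemma Finset.isLowerSet_ofSlices {𝒞 : ℕ → Finset (Finset α)}
    (h𝒞 : ∀ r, ∂ (𝒞 (r + 1)) ⊆ 𝒞 r) : IsLowerSet (ofSlices 𝒞 : Set (Finset α)) := by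
  refine isLowerSet_of_shadow_subset fun B hB => ?_
  obtain ⟨A, hA, x, hx, rfl⟩ := mem_shadow_iff.1 hB
  simp only [ofSlices, mem_filter, mem_univ, true_and] at hA ⊢
  refine h𝒞 _ (mem_shadow_iff.2 ⟨A, ?_, x, hx, rfl⟩)
  rwa [card_erase_add_one hx]

end Families

section FVector

variable {n : ℕ}

theorem Finset.Colex.IsInitSeg.shadow_subset_of_isCascade {m : ℕ}
    {𝒞 𝒟 : Finset (Finset (Fin n))} (h𝒞 : IsInitSeg 𝒞 (m + 1)) (h𝒟 : IsInitSeg 𝒟 m)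
    (h : 𝒞.Nonempty → ∀ j a, IsCascade (m + 1) #𝒞 j a →
      ∑ t ∈ Icc j (m + 1), (a t).choose (t - 1) ≤ #𝒟) :
    ∂ 𝒞 ⊆ 𝒟 := by
  obtain rfl | hne := 𝒞.eq_empty_or_nonempty
  · simp
  obtain ⟨j, a, ha, hshadow⟩ := h𝒞.exists_isCascade (Nat.le_add_left 1 m) hne
  exact (h𝒞.shadow : IsInitSeg _ m).subset_of_card_le h𝒟 (hshadow ▸ h hne j a ha)

theorem IsLowerSet.sum_choose_le_card_slice {K : Finset (Finset (Fin n))}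
    (hK : IsLowerSet (K : Set (Finset (Fin n)))) {l j : ℕ} {a : ℕ → ℕ}
    (ha : IsCascade l #(K.slice l) j a) :
    ∑ t ∈ Icc j l, (a t).choose (t - 1) ≤ #(K.slice (l - 1)) := by
  obtain ⟨𝒞, h𝒞, h𝒞K, h𝒞a⟩ :=
    ha.exists_isInitSeg (n := n) (by simpa using (sized_slice (𝒜 := K)).card_le)
  calc ∑ t ∈ Icc j l, (a t).choose (t - 1) = #(∂ 𝒞) := h𝒞a.symm
    _ ≤ #(∂ (K.slice l)) := kruskal_katona sized_slice h𝒞K.le h𝒞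
    _ ≤ #(K.slice (l - 1)) := card_le_card (hK.shadow_slice_subset l)

theorem exists_isLowerSet_card_slice_eq {F : ℕ → ℕ} (hF : ∀ m, F m ≤ n.choose m) (hF₀ : F 0 = 1)
    (hcasc : ∀ m, 1 ≤ m → 0 < F (m + 1) → ∀ j a, IsCascade (m + 1) (F (m + 1)) j a →
      ∑ t ∈ Icc j (m + 1), (a t).choose (t - 1) ≤ F m) :
    ∃ K : Finset (Finset (Fin n)), IsLowerSet (K : Set (Finset (Fin n))) ∧
      ∀ m, #(K.slice m) = F m := by
  choose 𝒞 h𝒞 h𝒞F using fun m => exists_isInitSeg_card_eq (α := Fin n) (by simpa using hF m)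
  have hshadow (m : ℕ) : ∂ (𝒞 (m + 1)) ⊆ 𝒞 m := by
    refine (h𝒞 (m + 1)).shadow_subset_of_isCascade (h𝒞 m) fun hne j a ha => ?_
    rw [h𝒞F] at ha ⊢
    rcases m.eq_zero_or_pos with rfl | hm
    · obtain rfl : j = 1 := by have := ha.1; have := ha.2.1; omega
      simp [hF₀]
    · exact hcasc m hm (h𝒞F (m + 1) ▸ hne.card_pos) j a ha
  refine ⟨ofSlices 𝒞, isLowerSet_ofSlices hshadow, fun m => ?_⟩
  rw [slice_ofSlices (fun m => (h𝒞 m).1), h𝒞F]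

theorem exists_isLowerSet_card_slice_eq_of_cascade_le {f : ℕ → ℕ}
    (hle : ∀ l ∈ Icc 1 n, f l ≤ n.choose l)
    (hcasc : ∀ l, 2 ≤ l → l ≤ n → 0 < f l → ∀ j a, IsCascade l (f l) j a →
      ∑ t ∈ Icc j l, (a t).choose (t - 1) ≤ f (l - 1)) :
    ∃ K : Finset (Finset (Fin n)), IsLowerSet (K : Set (Finset (Fin n))) ∧
      ∀ l ∈ Icc 1 n, #(K.slice l) = f l := by
  let F m := if m = 0 then 1 else if m ≤ n then f m else 0
  have hF (m : ℕ) : F m ≤ n.choose m := by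
    simp only [F]
    split_ifs with h0 hmn
    · simp [h0]
    · exact hle m (mem_Icc.2 ⟨by omega, hmn⟩)
    · exact Nat.zero_le _
  have hFcasc (m : ℕ) (hm : 1 ≤ m) (hpos : 0 < F (m + 1)) (j : ℕ) (a : ℕ → ℕ)
      (ha : IsCascade (m + 1) (F (m + 1)) j a) :
      ∑ t ∈ Icc j (m + 1), (a t).choose (t - 1) ≤ F m := by
    have hmn : m + 1 ≤ n := by
      by_contra hmn
      simp [F, hmn] at hpos
    simp only [F, add_eq_zero, one_ne_zero, and_false, if_false, if_pos hmn,
      Nat.pos_iff_ne_zero.1 hm, if_pos (Nat.le_of_succ_le hmn)] at ha hpos ⊢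
    exact hcasc (m + 1) (by omega) hmn hpos j a ha
  obtain ⟨K, hK, hKF⟩ := exists_isLowerSet_card_slice_eq hF rfl hFcasc
  refine ⟨K, hK, fun l hl => ?_⟩
  simp only [mem_Icc] at hl
  simpa only [F, hl.2, show l ≠ 0 by omega, if_true, if_false] using hKF l

end FVector

/-- Kruskal–Katona f-vector characterization: (f_1,...,f_n) is the f-vector of a
simplicial complex on n vertices iff f_l ≤ C(n,l) for all l and the cascade
condition relating f_l and f_{l-1} holds. -/
theorem kruskal_katona_f_vector (n : ℕ) (f : ℕ → ℕ) :
    (∃ K : Finset (Finset (Fin n)),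
      (∀ A ∈ K, ∀ B : Finset (Fin n), B ⊆ A → B ∈ K) ∧
      (∀ l ∈ Finset.Icc 1 n, (K.filter (fun A => A.card = l)).card = f l)) ↔
    ((∀ l ∈ Finset.Icc 1 n, f l ≤ n.choose l) ∧
      (∀ l : ℕ, 2 ≤ l → l ≤ n → 0 < f l →
        ∀ (j : ℕ) (a : ℕ → ℕ), IsCascade l (f l) j a →
          ∑ t ∈ Finset.Icc j l, (a t).choose (t - 1) ≤ f (l - 1))) := by
  constructor
  · rintro ⟨K, hK, hcount⟩
    have hlower : IsLowerSet (K : Set (Finset (Fin n))) := fun A B hBA hA => hK A hA B hBA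
    refine ⟨fun l hl => ?_, fun l hl2 hln _ j a ha => ?_⟩
    · rw [← hcount l hl]
      exact (by simpa using (sized_slice (𝒜 := K)).card_le : #(K.slice l) ≤ n.choose l)
    · rw [← hcount l (by simp; omega)] at ha
      rw [← hcount (l - 1) (by simp; omega)]
      exact hlower.sum_choose_le_card_slice ha
  · rintro ⟨hle, hcasc⟩
    obtain ⟨K, hK, hKf⟩ := exists_isLowerSet_card_slice_eq_of_cascade_le hle hcasc
    exact ⟨K, fun A hA B hBA => hK hBA hA, hKf⟩
end
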